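/- arXiv:0812.4091 — 2 statements merged into one kernel-verified Lean document; each statement's English description precedes it below -/
import Mathlib

section
/- Let a(n,m) be the number of 3-Motzkin paths of length n with exactly m steps H₂, and let b(n,m) be the number of 3-Motzkin paths of length n with exactly m steps H₂ of positive height. Let A = ∑_{n,m≥0} a(n,m) xⁿ yᵐ and B = ∑_{n,m≥0} b(n,m) xⁿ yᵐ, formal power series in two commuting variables x, y over ℚ. Then B = 1 + 3·x·B + x²·B·A. -/
/-- Steps of a 3-Motzkin path: `U = (1,1)`, `D = (1,-1)` and three
labeled horizontal steps `H0, H1, H2` (each equal to `(1,0)`). -/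
inductive MStep : Type
  | U : MStep
  | D : MStep
  | H0 : MStep
  | H1 : MStep
  | H2 : MStep
  deriving DecidableEq

/-- The contribution of a step to the y-coordinate. -/
def MStep.eff : MStep → ℤ
  | U => 1
  | D => -1
  | H0 => 0
  | H1 => 0
  | H2 => 0

/-- The height (y-coordinate of the starting point) of the `i`-th step (0-indexed). -/
def mHeight (L : List MStep) (i : ℕ) : ℤ := ((L.take i).map MStep.eff).sum

/-- `L` is a 3-Motzkin path of length `n`: it has `n` steps, ends at height `0`,
and never goes below the x-axis. -/
def IsMotzkin3 (L : List MStep) (n : ℕ) : Prop :=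
  L.length = n ∧ (L.map MStep.eff).sum = 0 ∧ ∀ i, 0 ≤ mHeight L i

/-- The number of `H2` steps of `L` of positive height. -/
def posH2Steps (L : List MStep) : ℕ :=
  ((Finset.range L.length).filter
    (fun i => L[i]? = some MStep.H2 ∧ 0 < mHeight L i)).card

/-!
First-return decomposition: a nonempty 3-Motzkin path is either `Hⱼ T` or `U P D Q` with
Motzkin paths `T`, `P`, `Q`. A leading horizontal step has height `0`, while every step of `P`
has positive height, so the `H₂` steps of positive height of `U P D Q` are all `H₂` steps of `P`
(the statistic of `A`) together with those of `Q` (the statistic of `B`). Viewing paths as a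
class weighted by `xⁿ yᵐ`, this bijection
`Motzkin ≃ 1 ⊕ (3 × Motzkin) ⊕ (Motzkin × Motzkin)` turns into `B = 1 + 3xB + x²AB`.
-/

namespace MvPowerSeries

open Finset.HasAntidiagonal

variable {σ R α β : Type*} [Semiring R]

-- `Nat.card` of an infinite fibre is `0`, hence the finiteness hypotheses below.
noncomputable def genFun (w : α → σ →₀ ℕ) : MvPowerSeries σ R :=
  fun d => Nat.card {x // w x = d}

theorem coeff_genFun (w : α → σ →₀ ℕ) (d : σ →₀ ℕ) :
    coeff d (genFun w : MvPowerSeries σ R) = Nat.card {x // w x = d} := rfl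

theorem genFun_eq_of_bijective {w : α → σ →₀ ℕ} {w' : β → σ →₀ ℕ} {f : α → β}
    (hf : f.Bijective) (hw : ∀ x, w' (f x) = w x) :
    (genFun w' : MvPowerSeries σ R) = genFun w :=
  ext fun d => congrArg Nat.cast <| Nat.card_congr <| .symm <|
    (Equiv.ofBijective f hf).subtypeEquiv (p := fun x => w x = d) (q := fun y => w' y = d)
      fun x => by rw [Equiv.ofBijective_apply, hw]

def fiberSumEquiv (w₁ : α → σ →₀ ℕ) (w₂ : β → σ →₀ ℕ) (d : σ →₀ ℕ) :
    {x // Sum.elim w₁ w₂ x = d} ≃ {a // w₁ a = d} ⊕ {b // w₂ b = d} :=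
  Equiv.subtypeSum

def fiberProdEquiv [DecidableEq σ] (w₁ : α → σ →₀ ℕ) (w₂ : β → σ →₀ ℕ) (d : σ →₀ ℕ) :
    {x : α × β // w₁ x.1 + w₂ x.2 = d} ≃
      Σ p : antidiagonal d, {a // w₁ a = p.1.1} × {b // w₂ b = p.1.2} where
  toFun x := ⟨⟨(w₁ x.1.1, w₂ x.1.2), mem_antidiagonal.2 x.2⟩, ⟨x.1.1, rfl⟩, ⟨x.1.2, rfl⟩⟩
  invFun y := ⟨(y.2.1, y.2.2), by rw [y.2.1.2, y.2.2.2]; exact mem_antidiagonal.1 y.1.2⟩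
  left_inv _ := rfl
  right_inv := by
    rintro ⟨⟨⟨_, _⟩, _⟩, ⟨_, ha⟩, ⟨_, hb⟩⟩
    dsimp only at ha hb
    subst ha hb
    rfl

variable {w₁ : α → σ →₀ ℕ} {w₂ : β → σ →₀ ℕ}

theorem finite_fiber_sum (h₁ : ∀ d, Finite {a // w₁ a = d}) (h₂ : ∀ d, Finite {b // w₂ b = d})
    (d : σ →₀ ℕ) : Finite {x // Sum.elim w₁ w₂ x = d} :=
  have := h₁ d; have := h₂ d; .of_equiv _ (fiberSumEquiv w₁ w₂ d).symm

theorem finite_fiber_prod (h₁ : ∀ d, Finite {a // w₁ a = d}) (h₂ : ∀ d, Finite {b // w₂ b = d})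
    (d : σ →₀ ℕ) : Finite {x : α × β // w₁ x.1 + w₂ x.2 = d} :=
  have := Classical.decEq σ
  have := fun d => h₁ d; have := fun d => h₂ d; .of_equiv _ (fiberProdEquiv w₁ w₂ d).symm

theorem genFun_sum_elim (h₁ : ∀ d, Finite {a // w₁ a = d}) (h₂ : ∀ d, Finite {b // w₂ b = d}) :
    (genFun (Sum.elim w₁ w₂) : MvPowerSeries σ R) = genFun w₁ + genFun w₂ :=
  ext fun d => by
    have := h₁ d; have := h₂ d
    rw [map_add, coeff_genFun, coeff_genFun, coeff_genFun,
      Nat.card_congr (fiberSumEquiv w₁ w₂ d), Nat.card_sum, Nat.cast_add]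

theorem genFun_prod (h₁ : ∀ d, Finite {a // w₁ a = d}) (h₂ : ∀ d, Finite {b // w₂ b = d}) :
    (genFun (fun x : α × β => w₁ x.1 + w₂ x.2) : MvPowerSeries σ R) = genFun w₁ * genFun w₂ :=
  ext fun d => by
    classical
    have := fun d => h₁ d; have := fun d => h₂ d
    rw [coeff_genFun, coeff_mul, Nat.card_congr (fiberProdEquiv w₁ w₂ d), Nat.card_sigma,
      ← Finset.sum_coe_sort (antidiagonal d)]
    simp only [Nat.card_prod, Nat.cast_sum, Nat.cast_mul, coeff_genFun]

theorem genFun_const [Finite α] (c : σ →₀ ℕ) :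
    (genFun (fun _ : α => c) : MvPowerSeries σ R) =
      (Nat.card α : MvPowerSeries σ R) * monomial c 1 :=
  ext fun d => by
    classical
    rw [coeff_genFun, ← map_natCast (C (σ := σ) (R := R)), coeff_C_mul, coeff_monomial]
    by_cases h : c = d
    · simp [h]
    · simp [h, Ne.symm h]

theorem genFun_const_add (c : σ →₀ ℕ) (w : α → σ →₀ ℕ) :
    (genFun (fun x => c + w x) : MvPowerSeries σ R) = monomial c 1 * genFun w :=
  ext fun d => by
    rw [coeff_genFun, coeff_monomial_mul, coeff_genFun, one_mul]
    split_ifs with h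
    · exact congrArg _ (Nat.card_congr (.subtypeEquivRight fun x => by
        rw [eq_tsub_iff_add_eq_of_le h, add_comm]))
    · have : IsEmpty {x // c + w x = d} := ⟨fun x => h (x.2 ▸ le_self_add)⟩
      simp

theorem finite_fiber_const_add {w : α → σ →₀ ℕ} (h : ∀ d, Finite {a // w a = d}) (c d : σ →₀ ℕ) :
    Finite {x // c + w x = d} :=
  have := h (d - c)
  .of_injective
    (fun x => (⟨x.1, by rw [← add_tsub_cancel_left c (w x.1), x.2]⟩ : {a // w a = d - c}))
    fun _ _ h => Subtype.ext (Subtype.mk.inj h)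

end MvPowerSeries

namespace MStep

instance : Fintype MStep :=
  ⟨⟨{U, D, H0, H1, H2}, by decide⟩, fun s => by cases s <;> decide⟩

def horizontal : Fin 3 → MStep := ![H0, H1, H2]

@[simp] lemma eff_horizontal (j : Fin 3) : (horizontal j).eff = 0 := by fin_cases j <;> rfl

lemma horizontal_injective : horizontal.Injective := by decide

lemma horizontal_ne_U (j : Fin 3) : horizontal j ≠ U := by fin_cases j <;> decide

lemma exists_horizontal_eq {s : MStep} (hU : s ≠ U) (hD : s ≠ D) : ∃ j, horizontal j = s := by
  cases s
  exacts [absurd rfl hU, absurd rfl hD, ⟨0, rfl⟩, ⟨1, rfl⟩, ⟨2, rfl⟩]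

end MStep

open MStep

def endHeight (L : List MStep) : ℤ := (L.map eff).sum

@[simp] lemma endHeight_nil : endHeight [] = 0 := rfl

@[simp] lemma endHeight_cons (s : MStep) (L : List MStep) :
    endHeight (s :: L) = s.eff + endHeight L := by
  simp [endHeight]

@[simp] lemma endHeight_append (P Q : List MStep) :
    endHeight (P ++ Q) = endHeight P + endHeight Q := by
  simp [endHeight]

@[simp] lemma mHeight_zero (L : List MStep) : mHeight L 0 = 0 := rfl

@[simp] lemma mHeight_nil (i : ℕ) : mHeight [] i = 0 := by simp [mHeight]

@[simp] lemma mHeight_cons_succ (s : MStep) (L : List MStep) (i : ℕ) :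
    mHeight (s :: L) (i + 1) = s.eff + mHeight L i := by
  simp [mHeight]

def StaysNonneg (h : ℤ) (L : List MStep) : Prop := ∀ i, 0 ≤ h + mHeight L i

lemma StaysNonneg.nonneg {h : ℤ} {L : List MStep} (H : StaysNonneg h L) : 0 ≤ h := by
  simpa using H 0

lemma StaysNonneg.mono {h h' : ℤ} {L : List MStep} (H : StaysNonneg h L) (hh : h ≤ h') :
    StaysNonneg h' L := fun i => by linarith [H i]

@[simp] lemma staysNonneg_nil {h : ℤ} : StaysNonneg h [] ↔ 0 ≤ h := by
  simp [StaysNonneg]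

@[simp] lemma staysNonneg_cons {h : ℤ} {s : MStep} {L : List MStep} :
    StaysNonneg h (s :: L) ↔ 0 ≤ h ∧ StaysNonneg (h + s.eff) L := by
  refine ⟨fun H => ⟨H.nonneg, fun i => by simpa [add_assoc] using H (i + 1)⟩, ?_⟩
  rintro ⟨h0, H⟩ (_ | i)
  · simpa using h0
  · simpa [add_assoc] using H i

lemma staysNonneg_append {h : ℤ} {P Q : List MStep} :
    StaysNonneg h (P ++ Q) ↔ StaysNonneg h P ∧ StaysNonneg (h + endHeight P) Q := by
  induction P generalizing h with
  | nil => simpa using fun H => H.nonneg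
  | cons s P ih => simp [ih, and_assoc, add_assoc]

def IsMotzkin (L : List MStep) : Prop := endHeight L = 0 ∧ StaysNonneg 0 L

lemma isMotzkin3_iff {L : List MStep} {n : ℕ} : IsMotzkin3 L n ↔ L.length = n ∧ IsMotzkin L := by
  simp [IsMotzkin3, IsMotzkin, endHeight, StaysNonneg]

lemma isMotzkin_nil : IsMotzkin [] := by simp [IsMotzkin]

lemma isMotzkin_horizontal_cons (j : Fin 3) {L : List MStep} :
    IsMotzkin (horizontal j :: L) ↔ IsMotzkin L := by
  simp [IsMotzkin]

lemma not_isMotzkin_D_cons (L : List MStep) : ¬ IsMotzkin (D :: L) := fun H => by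
  have := (staysNonneg_cons.1 H.2).2.nonneg
  simp [eff] at this

lemma not_staysNonneg_append_D_cons {P : List MStep} (hP : IsMotzkin P) (R : List MStep) :
    ¬ StaysNonneg 0 (P ++ D :: R) := fun H => by
  have := (staysNonneg_cons.1 (staysNonneg_append.1 H).2).2.nonneg
  simp [hP.1, eff] at this

lemma exists_first_passage {T : List MStep} {h : ℤ} (h0 : 0 ≤ h) (hT : h + endHeight T < 0) :
    ∃ P R, T = P ++ D :: R ∧ h + endHeight P = 0 ∧ StaysNonneg h P := by
  induction T generalizing h with
  | nil => simp at hT; omega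
  | cons s T ih =>
    by_cases hs : s = D ∧ h = 0
    · obtain ⟨rfl, rfl⟩ := hs
      exact ⟨[], T, rfl, rfl, staysNonneg_nil.2 le_rfl⟩
    · have h0' : 0 ≤ h + s.eff := by cases s <;> simp [eff] at hs ⊢ <;> omega
      obtain ⟨P, R, rfl, hP, hPs⟩ := ih h0' (by simp at hT; omega)
      exact ⟨s :: P, R, rfl, by simp; omega, staysNonneg_cons.2 ⟨h0, hPs⟩⟩

lemma eq_of_append_D_cons_eq {P Q P' Q' : List MStep} (hP : IsMotzkin P) (hP' : IsMotzkin P')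
    (h : P ++ D :: Q = P' ++ D :: Q') : P = P' ∧ Q = Q' := by
  rcases List.append_eq_append_iff.1 h with ⟨_ | ⟨s, R⟩, rfl, hQ⟩ | ⟨_ | ⟨s, R⟩, rfl, hQ⟩
  · simpa using hQ
  · obtain ⟨rfl, rfl⟩ := List.cons.inj hQ
    exact absurd hP'.2 (not_staysNonneg_append_D_cons hP R)
  · simpa [eq_comm] using hQ
  · obtain ⟨rfl, rfl⟩ := List.cons.inj hQ
    exact absurd hP.2 (not_staysNonneg_append_D_cons hP' R)

lemma isMotzkin_arch {P Q : List MStep} (hP : IsMotzkin P) (hQ : IsMotzkin Q) :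
    IsMotzkin (U :: (P ++ D :: Q)) := by
  refine ⟨by simp [hP.1, hQ.1, eff], ?_⟩
  simpa [staysNonneg_append, hP.1, eff, hQ.2] using hP.2.mono zero_le_one

lemma exists_arch_eq {T : List MStep} (hT : IsMotzkin (U :: T)) :
    ∃ P Q, T = P ++ D :: Q ∧ IsMotzkin P ∧ IsMotzkin Q := by
  obtain ⟨hT, hTs⟩ := hT
  simp only [endHeight_cons, staysNonneg_cons, eff] at hT hTs
  obtain ⟨P, Q, rfl, hP, hPs⟩ := exists_first_passage (T := T) le_rfl (by omega)
  rw [zero_add] at hP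
  simp only [endHeight_append, endHeight_cons, staysNonneg_append, staysNonneg_cons, hP, eff]
    at hT hTs
  exact ⟨P, Q, rfl, ⟨hP, hPs⟩, by omega, by simpa using hTs.2.2.2⟩

def posH2From (h : ℤ) : List MStep → ℕ
  | [] => 0
  | s :: L => (if s = H2 ∧ 0 < h then 1 else 0) + posH2From (h + s.eff) L

@[simp] lemma posH2From_nil (h : ℤ) : posH2From h [] = 0 := rfl

@[simp] lemma posH2From_cons (h : ℤ) (s : MStep) (L : List MStep) :
    posH2From h (s :: L) = (if s = H2 ∧ 0 < h then 1 else 0) + posH2From (h + s.eff) L := rfl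

lemma posH2From_append (h : ℤ) (P Q : List MStep) :
    posH2From h (P ++ Q) = posH2From h P + posH2From (h + endHeight P) Q := by
  induction P generalizing h with
  | nil => simp
  | cons s P ih => simp [ih, add_assoc]

lemma posH2From_add_one {h : ℤ} {L : List MStep} (hL : StaysNonneg h L) :
    posH2From (h + 1) L = L.count H2 := by
  induction L generalizing h with
  | nil => rfl
  | cons s L ih =>
    obtain ⟨h0, hL⟩ := staysNonneg_cons.1 hL
    rw [posH2From_cons, add_right_comm, ih hL, List.count_cons]
    by_cases hs : s = H2 <;> simp [hs, add_comm]
    omega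

lemma card_filter_eq_posH2From (h : ℤ) (L : List MStep) :
    ((Finset.range L.length).filter
      (fun i => L[i]? = some H2 ∧ 0 < h + mHeight L i)).card = posH2From h L := by
  induction L generalizing h with
  | nil => simp
  | cons s L ih =>
    rw [posH2From_cons, ← ih (h + s.eff), Finset.card_filter, Finset.card_filter,
      List.length_cons, Finset.sum_range_succ']
    simp only [List.getElem?_cons_succ, List.getElem?_cons_zero, mHeight_cons_succ, mHeight_zero,
      Option.some.injEq, add_zero, ← add_assoc]
    exact add_comm _ _

lemma posH2Steps_eq_posH2From (L : List MStep) : posH2Steps L = posH2From 0 L := by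
  simp [posH2Steps, ← card_filter_eq_posH2From]

lemma posH2Steps_horizontal_cons (j : Fin 3) (L : List MStep) :
    posH2Steps (horizontal j :: L) = posH2Steps L := by
  simp [posH2Steps_eq_posH2From]

lemma posH2Steps_arch {P : List MStep} (hP : IsMotzkin P) (Q : List MStep) :
    posH2Steps (U :: (P ++ D :: Q)) = P.count H2 + posH2Steps Q := by
  have := posH2From_add_one hP.2
  simp_all [posH2Steps_eq_posH2From, posH2From_append, hP.1, eff]

lemma Finsupp.single_zero_add_single_one_inj {a b n m : ℕ} :
    single (0 : Fin 2) a + single 1 b = single 0 n + single 1 m ↔ a = n ∧ b = m := by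
  refine ⟨fun h => ⟨?_, ?_⟩, by rintro ⟨rfl, rfl⟩; rfl⟩
  · simpa using DFunLike.congr_fun h 0
  · simpa using DFunLike.congr_fun h 1

abbrev MotzkinPath : Type := {L : List MStep // IsMotzkin L}

namespace MotzkinPath

open MvPowerSeries

noncomputable def weight (stat : List MStep → ℕ) (L : MotzkinPath) : Fin 2 →₀ ℕ :=
  Finsupp.single 0 L.1.length + Finsupp.single 1 (stat L.1)

lemma finite_fiber_weight (stat : List MStep → ℕ) (d : Fin 2 →₀ ℕ) :
    Finite {L // weight stat L = d} :=
  have : Finite {L : List MStep | L.length = d 0} := List.finite_length_eq MStep (d 0)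
  .of_injective (fun L => (⟨L.1.1, by simp [← L.2, weight]⟩ : {L : List MStep | L.length = d 0}))
    fun _ _ h => Subtype.ext (Subtype.ext (Subtype.mk.inj h))

def ofFirstReturn : Unit ⊕ (Fin 3 × MotzkinPath) ⊕ (MotzkinPath × MotzkinPath) → MotzkinPath
  | .inl _ => ⟨[], isMotzkin_nil⟩
  | .inr (.inl (j, T)) => ⟨horizontal j :: T.1, (isMotzkin_horizontal_cons j).2 T.2⟩
  | .inr (.inr (P, Q)) => ⟨U :: (P.1 ++ D :: Q.1), isMotzkin_arch P.2 Q.2⟩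

lemma ofFirstReturn_injective : ofFirstReturn.Injective := by
  rintro (_ | ⟨j, T⟩ | ⟨P, Q⟩) (_ | ⟨j', T'⟩ | ⟨P', Q'⟩) h <;>
    simp only [ofFirstReturn, Subtype.mk.injEq, List.cons.injEq, reduceCtorEq] at h ⊢
  · rw [horizontal_injective h.1, Subtype.ext h.2]
  · exact absurd h.1 (horizontal_ne_U j)
  · exact absurd h.1.symm (horizontal_ne_U j')
  · obtain ⟨hP, hQ⟩ := eq_of_append_D_cons_eq P.2 P'.2 h.2
    rw [Subtype.ext hP, Subtype.ext hQ]

lemma ofFirstReturn_surjective : ofFirstReturn.Surjective := by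
  rintro ⟨_ | ⟨s, T⟩, hL⟩
  · exact ⟨.inl (), rfl⟩
  by_cases hU : s = U
  · subst hU
    obtain ⟨P, Q, rfl, hP, hQ⟩ := exists_arch_eq hL
    exact ⟨.inr (.inr (⟨P, hP⟩, ⟨Q, hQ⟩)), rfl⟩
  · have hD : s ≠ D := by rintro rfl; exact not_isMotzkin_D_cons T hL
    obtain ⟨j, rfl⟩ := exists_horizontal_eq hU hD
    exact ⟨.inr (.inl (j, ⟨T, (isMotzkin_horizontal_cons j).1 hL⟩)), rfl⟩

lemma weight_ofFirstReturn (x : Unit ⊕ (Fin 3 × MotzkinPath) ⊕ (MotzkinPath × MotzkinPath)) :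
    weight posH2Steps (ofFirstReturn x) =
      Sum.elim (fun _ => 0)
        (Sum.elim (fun p => Finsupp.single 0 1 + weight posH2Steps p.2)
          fun p => Finsupp.single 0 2 + (weight (List.count H2) p.1 + weight posH2Steps p.2)) x := by
  rcases x with _ | ⟨j, T⟩ | ⟨P, Q⟩ <;> ext i <;> fin_cases i
  · simp [ofFirstReturn, weight]
  · simp [ofFirstReturn, weight, posH2Steps]
  · simp [ofFirstReturn, weight, add_comm]
  · simp [ofFirstReturn, weight, posH2Steps_horizontal_cons]
  · simp [ofFirstReturn, weight]; omega
  · simp [ofFirstReturn, weight, posH2Steps_arch P.2]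

theorem genFun_weight_posH2Steps {R : Type*} [CommSemiring R] :
    (genFun (weight posH2Steps) : MvPowerSeries (Fin 2) R) =
      1 + 3 * X 0 * genFun (weight posH2Steps) +
        X 0 ^ 2 * genFun (weight posH2Steps) * genFun (weight (List.count H2)) := by
  have ha := finite_fiber_weight (List.count H2)
  have hb := finite_fiber_weight posH2Steps
  have hH : ∀ d, Finite {p : Fin 3 × MotzkinPath //
      Finsupp.single 0 1 + weight posH2Steps p.2 = d} :=
    finite_fiber_prod (w₁ := fun _ => Finsupp.single 0 1) (fun _ => Subtype.finite) hb
  have hUD : ∀ d, Finite {p : MotzkinPath × MotzkinPath //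
      Finsupp.single 0 2 + (weight (List.count H2) p.1 + weight posH2Steps p.2) = d} :=
    finite_fiber_const_add (finite_fiber_prod ha hb) _
  refine (genFun_eq_of_bijective ⟨ofFirstReturn_injective, ofFirstReturn_surjective⟩
    weight_ofFirstReturn).trans ?_
  rw [genFun_sum_elim (fun _ => Subtype.finite) (finite_fiber_sum hH hUD), genFun_sum_elim hH hUD,
    genFun_prod (w₁ := fun _ : Fin 3 => Finsupp.single 0 1) (fun _ => Subtype.finite) hb,
    genFun_const_add, genFun_prod ha hb, genFun_const, genFun_const, X_pow_eq, X_def,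
    monomial_zero_one, Nat.card_unique, Nat.card_eq_fintype_card, Fintype.card_fin]
  push_cast
  ring

lemma eq_genFun_weight {R : Type*} [Semiring R] {F : MvPowerSeries (Fin 2) R}
    (stat : List MStep → ℕ)
    (hF : ∀ n m : ℕ, coeff (Finsupp.single 0 n + Finsupp.single 1 m) F =
      Nat.card {L : List MStep // IsMotzkin3 L n ∧ stat L = m}) :
    F = genFun (weight stat) := by
  ext d
  obtain ⟨n, m, rfl⟩ : ∃ n m, d = Finsupp.single 0 n + Finsupp.single 1 m :=
    ⟨d 0, d 1, by ext i; fin_cases i <;> simp⟩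
  rw [hF, coeff_genFun]
  congr 1
  refine Nat.card_congr ((Equiv.subtypeEquivRight fun L => ?_).trans
    (Equiv.subtypeSubtypeEquivSubtypeInter IsMotzkin
      fun L => Finsupp.single 0 L.length + Finsupp.single 1 (stat L) = _).symm)
  rw [isMotzkin3_iff, Finsupp.single_zero_add_single_one_inj]
  tauto

end MotzkinPath

/-- Let `a n m` be the number of 3-Motzkin paths of length `n` with exactly `m` steps `H2`,
and `b n m` the number of 3-Motzkin paths of length `n` with exactly `m` steps `H2` of
positive height.  Let `A = ∑ a(n,m) xⁿ yᵐ` and `B = ∑ b(n,m) xⁿ yᵐ` be the corresponding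
formal power series in two commuting variables `x = X 0`, `y = X 1` over `ℚ`.
Then `B = 1 + 3·x·B + x²·B·A`. -/
theorem stmt18 (a b : ℕ → ℕ → ℕ)
    (ha : ∀ n m, a n m =
      Nat.card {L : List MStep // IsMotzkin3 L n ∧ L.count MStep.H2 = m})
    (hb : ∀ n m, b n m =
      Nat.card {L : List MStep // IsMotzkin3 L n ∧ posH2Steps L = m})
    (A B : MvPowerSeries (Fin 2) ℚ)
    (hA : ∀ n m : ℕ,
      MvPowerSeries.coeff (R := ℚ) (Finsupp.single 0 n + Finsupp.single 1 m) A = a n m)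
    (hB : ∀ n m : ℕ,
      MvPowerSeries.coeff (R := ℚ) (Finsupp.single 0 n + Finsupp.single 1 m) B = b n m) :
    B = 1 + 3 * MvPowerSeries.X 0 * B + (MvPowerSeries.X 0) ^ 2 * B * A := by
  obtain rfl := MotzkinPath.eq_genFun_weight _ fun n m => (hA n m).trans (congrArg _ (ha n m))
  obtain rfl := MotzkinPath.eq_genFun_weight _ fun n m => (hB n m).trans (congrArg _ (hb n m))
  exact MotzkinPath.genFun_weight_posH2Steps
end

section
/- For every integer n ≥ 2, the number of UH-free Schröder paths of length 2(n−1) whose first step is U equals the number of 12312-avoiding partitions of [n] in which 1 and 2 lie in different blocks. -/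
/-!
Both families grow along the generating tree `(k) ⇝ (3)(4)⋯(k)(k)(k+1)`.

A canonical word `u` avoiding `12312` is extended by one of its allowed letters, and its label is
the number `k` of these. With `m` the largest letter, appending `m` keeps the allowed letters,
appending `m + 1` adds `m + 2`, and appending an allowed `x < m` keeps the allowed letters `≤ x`
together with `m` and `m + 1`.

A UH-free Schröder path `L` has as label one more than the number of its grounds: the points on
the axis (start and end included) not followed by `H`. Its children are `L·H`, which has the same
label, and, for each ground `g`, the path obtained by wrapping the part after `g` into `U … D`,
whose grounds are those up to `g` and the new end. The last-return decomposition shows that every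
path arises exactly once.

Trees with the same succession rule and isomorphic roots are isomorphic level by level. Both
side conditions of the theorem are inherited by children, and at the first level they single out
`[1, 2]` and `[U, D]`, which both have label `3`.
-/

/-- Steps of a Schröder path: `U = (1,1)`, `D = (1,-1)`, `H = H² = (2,0)`. -/
inductive SStep : Type
  | U : SStep
  | D : SStep
  | H : SStep
  deriving DecidableEq

/-- The contribution of a step to the x-coordinate. -/
def SStep.len : SStep → ℕ
  | U => 1
  | D => 1
  | H => 2

/-- The contribution of a step to the y-coordinate. -/
def SStep.eff : SStep → ℤ
  | U => 1
  | D => -1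
  | H => 0

/-- The height (y-coordinate of the starting point) of the `i`-th step (0-indexed);
for `i = L.length` this is the final height of the path. -/
def sHeight (L : List SStep) (i : ℕ) : ℤ := ((L.take i).map SStep.eff).sum

/-- `L` is a Schröder path of length `2 * n`: it has total horizontal displacement `2 * n`,
ends at height `0`, and never goes below the x-axis. -/
def IsSchroder (L : List SStep) (n : ℕ) : Prop :=
  (L.map SStep.len).sum = 2 * n ∧ (L.map SStep.eff).sum = 0 ∧ ∀ i, 0 ≤ sHeight L i

/-- A peak at position `i`: an up step immediately followed by a down step.
The height of this peak is `sHeight L (i+1)`, the height of its down step. -/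
def IsPeakAt (L : List SStep) (i : ℕ) : Prop :=
  L[i]? = some SStep.U ∧ L[i+1]? = some SStep.D

/-- `L` has no peak of odd height. -/
def NoOddPeak (L : List SStep) : Prop :=
  ∀ i, IsPeakAt L i → ¬ Odd (sHeight L (i+1))

/-- `L` has no peak of even height. -/
def NoEvenPeak (L : List SStep) : Prop :=
  ∀ i, IsPeakAt L i → ¬ Even (sHeight L (i+1))

/-- `L` is UH-free: no up step is immediately followed by a horizontal step. -/
def UHFree (L : List SStep) : Prop :=
  ∀ i, ¬ (L[i]? = some SStep.U ∧ L[i+1]? = some SStep.H)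

/-- The number of peaks of `L` of even height greater than `2`. -/
def evenHighPeaks (L : List SStep) : ℕ :=
  ((Finset.range L.length).filter
    (fun i => L[i]? = some SStep.U ∧ L[i+1]? = some SStep.D ∧
      Even (sHeight L (i+1)) ∧ 2 < sHeight L (i+1))).card

/-- The maximum of the first `i` letters of `w` (and `0` if `i = 0`). -/
def prefMax (w : List ℕ) (i : ℕ) : ℕ := (w.take i).foldr max 0

/-- `w` is the canonical word of a set partition of `[n]` (where `n = w.length`):
it is a restricted growth string with letters in `{1, 2, ...}`, i.e. the `i`-th letter
is at least `1` and at most one more than the maximum of the previous letters.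
(The `i`-th letter is the index of the block containing `i+1`, blocks being
ordered by their minima.) -/
def IsCanonicalWord (w : List ℕ) : Prop :=
  ∀ i, i < w.length → 1 ≤ w.getD i 0 ∧ w.getD i 0 ≤ prefMax w i + 1

/-- The number of blocks of the partition with canonical word `w`. -/
def numBlocks (w : List ℕ) : ℕ := w.foldr max 0

/-- The canonical word `w` avoids the pattern `12312`: there is no subsequence
`b₁ b₂ b₃ b₄ b₅` (in this left-to-right order) with `b₁ = b₄`, `b₂ = b₅`
and `b₁ < b₂ < b₃`. -/
def Avoids12312 (w : List ℕ) : Prop :=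
  ¬ ∃ i1 i2 i3 i4 i5, i1 < i2 ∧ i2 < i3 ∧ i3 < i4 ∧ i4 < i5 ∧ i5 < w.length ∧
    w.getD i1 0 = w.getD i4 0 ∧ w.getD i2 0 = w.getD i5 0 ∧
    w.getD i1 0 < w.getD i2 0 ∧ w.getD i2 0 < w.getD i3 0

/-! ### Generating trees -/

/-- A generating tree with the succession rule `(k) ⇝ (3)(4)⋯(k)(k)(k+1)`, where the label is
`k = #slots + 1`: the children of `a` are indexed by `Option (slots a)`, the child `none` has as
many slots as `a`, and the child at the slot `x` has one slot more than there are slots `≤ x`. -/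
structure SlotTree where
  Obj : ℕ → Type
  slots : ∀ {n}, Obj n → Finset ℕ
  step : ∀ n, (Σ a : Obj n, Option (slots a)) ≃ Obj (n + 1)
  card_slots_step_none : ∀ n (a : Obj n), (slots (step n ⟨a, none⟩)).card = (slots a).card
  card_slots_step_some : ∀ n (a : Obj n) (x : slots a),
    (slots (step n ⟨a, some x⟩)).card = ((slots a).filter (· ≤ (x : ℕ))).card + 1

lemma Finset.card_filter_le_orderIso {α : Type*} [LinearOrder α] {s t : Finset α} (f : s ≃o t)
    (x : s) : (s.filter (· ≤ (x : α))).card = (t.filter (· ≤ (f x : α))).card := by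
  refine Finset.card_bij (fun y hy => (f ⟨y, (Finset.mem_filter.1 hy).1⟩ : α)) ?_ ?_ ?_
  · intro y hy
    obtain ⟨hys, hyx⟩ := Finset.mem_filter.1 hy
    exact Finset.mem_filter.2
      ⟨(f _).2, Subtype.coe_le_coe.2 (f.monotone (Subtype.coe_le_coe.1 hyx))⟩
  · intro y _ z _ hyz
    simpa using f.injective (Subtype.ext hyz)
  · intro z hz
    obtain ⟨hzt, hzx⟩ := Finset.mem_filter.1 hz
    refine ⟨f.symm ⟨z, hzt⟩, Finset.mem_filter.2 ⟨(f.symm _).2, ?_⟩, by simp⟩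
    have := f.symm.monotone (show (⟨z, hzt⟩ : t) ≤ f x from hzx)
    simpa using this

namespace SlotTree

theorem exists_equiv (T T' : SlotTree) (e₀ : T.Obj 0 ≃ T'.Obj 0)
    (h₀ : ∀ a, (T'.slots (e₀ a)).card = (T.slots a).card) :
    ∀ n, ∃ e : T.Obj n ≃ T'.Obj n, ∀ a, (T'.slots (e a)).card = (T.slots a).card
  | 0 => ⟨e₀, h₀⟩
  | n + 1 => by
    obtain ⟨e, he⟩ := exists_equiv T T' e₀ h₀ n
    let f a : T.slots a ≃o T'.slots (e a) :=
      ((T.slots a).orderIsoOfFin rfl).symm.trans ((T'.slots (e a)).orderIsoOfFin (he a))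
    refine ⟨(T.step n).symm.trans ((Equiv.sigmaCongr e fun a => (f a).toEquiv.optionCongr).trans
      (T'.step n)), ?_⟩
    intro b
    obtain ⟨⟨a, c⟩, rfl⟩ := (T.step n).surjective b
    simp only [Equiv.trans_apply, Equiv.symm_apply_apply]
    cases c with
    | none =>
      exact (T'.card_slots_step_none n (e a)).trans ((he a).trans (T.card_slots_step_none n a).symm)
    | some x =>
      exact (T'.card_slots_step_some n (e a) (f a x)).trans
        (by rw [T.card_slots_step_some, Finset.card_filter_le_orderIso (f a) x])

def restrict (T : SlotTree) (p : ∀ n, T.Obj n → Prop)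
    (hp : ∀ n a c, p (n + 1) (T.step n ⟨a, c⟩) ↔ p n a) : SlotTree where
  Obj n := {a // p n a}
  slots a := T.slots a.1
  step n := (Equiv.subtypeSigmaEquiv _ _).symm.trans
    (Equiv.subtypeEquiv (T.step n) fun x => (hp n x.1 x.2).symm)
  card_slots_step_none n a := T.card_slots_step_none n a.1
  card_slots_step_some n a := T.card_slots_step_some n a.1

end SlotTree

/-! ### Canonical words avoiding `12312` -/

lemma numBlocks_concat (u : List ℕ) (x : ℕ) :
    numBlocks (u ++ [x]) = max (numBlocks u) x := by
  induction u with
  | nil => simp [numBlocks]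
  | cons a u ih => simp only [numBlocks, List.cons_append, List.foldr_cons] at ih ⊢; omega

lemma le_numBlocks {u : List ℕ} {x : ℕ} (hx : x ∈ u) : x ≤ numBlocks u :=
  List.le_max_of_le' 0 hx le_rfl

lemma getD_le_numBlocks {u : List ℕ} {i : ℕ} (hi : i < u.length) :
    u.getD i 0 ≤ numBlocks u := by
  rw [List.getD_eq_getElem _ _ hi]
  exact le_numBlocks (List.getElem_mem hi)

lemma prefMax_succ {w : List ℕ} {i : ℕ} (hi : i < w.length) :
    prefMax w (i + 1) = max (prefMax w i) (w.getD i 0) := by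
  rw [prefMax, List.take_add_one, List.getElem?_eq_getElem hi, Option.toList_some,
    ← numBlocks, numBlocks_concat, List.getD_eq_getElem _ _ hi]
  rfl

lemma prefMax_length (w : List ℕ) : prefMax w w.length = numBlocks w := by
  rw [prefMax, List.take_length, numBlocks]

namespace IsCanonicalWord

variable {w : List ℕ}

lemma exists_getD_eq (hw : IsCanonicalWord w) {i t : ℕ} (hi : i ≤ w.length) (ht : 1 ≤ t)
    (hti : t ≤ prefMax w i) : ∃ j < i, w.getD j 0 = t := by
  induction i with
  | zero => simp [prefMax] at hti; omega
  | succ i ih =>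
    rw [prefMax_succ (by omega)] at hti
    by_cases hle : t ≤ prefMax w i
    · obtain ⟨j, hj, hjt⟩ := ih (by omega) hle
      exact ⟨j, by omega, hjt⟩
    · exact ⟨i, by omega, by have := (hw i (by omega)).2; omega⟩

lemma exists_getD_eq_of_lt (hw : IsCanonicalWord w) {i t : ℕ} (hi : i < w.length) (ht : 1 ≤ t)
    (hti : t < w.getD i 0) : ∃ j < i, w.getD j 0 = t :=
  hw.exists_getD_eq hi.le ht (by have := (hw i hi).2; omega)

lemma exists_getD_eq_of_le_numBlocks (hw : IsCanonicalWord w) {t : ℕ} (ht : 1 ≤ t)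
    (htw : t ≤ numBlocks w) : ∃ j < w.length, w.getD j 0 = t :=
  hw.exists_getD_eq le_rfl ht (by rwa [prefMax_length])

lemma one_le_numBlocks (hw : IsCanonicalWord w) (hne : w ≠ []) : 1 ≤ numBlocks w := by
  have h0 : 0 < w.length := List.length_pos_iff.2 hne
  exact (hw 0 h0).1.trans (getD_le_numBlocks h0)

end IsCanonicalWord

lemma getD_concat_of_lt {u : List ℕ} {x i : ℕ} (hi : i < u.length) :
    (u ++ [x]).getD i 0 = u.getD i 0 :=
  List.getD_append _ _ _ _ hi

lemma getD_concat_length (u : List ℕ) (x : ℕ) : (u ++ [x]).getD u.length 0 = x := by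
  simp

lemma isCanonicalWord_concat_iff {u : List ℕ} {x : ℕ} :
    IsCanonicalWord (u ++ [x]) ↔ IsCanonicalWord u ∧ 1 ≤ x ∧ x ≤ numBlocks u + 1 := by
  have hpref : ∀ i ≤ u.length, prefMax (u ++ [x]) i = prefMax u i := fun i hi => by
    rw [prefMax, prefMax, List.take_append_of_le_length hi]
  constructor
  · intro h
    refine ⟨fun i hi => ?_, ?_⟩
    · have := h i (by simp; omega)
      rwa [getD_concat_of_lt hi, hpref i hi.le] at this
    · simpa [hpref _ le_rfl, prefMax_length] using h u.length (by simp)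
  · rintro ⟨hu, hx⟩ i hi
    rw [List.length_append, List.length_singleton] at hi
    rw [hpref i (by omega)]
    rcases Nat.lt_or_ge i u.length with hi | hi
    · rw [getD_concat_of_lt hi]; exact hu i hi
    · obtain rfl : i = u.length := by omega
      rwa [getD_concat_length, prefMax_length]

/-- `u` contains `1231` with `y` in the role of `2`, so that appending `y` creates `12312`. -/
def Completes12312 (u : List ℕ) (y : ℕ) : Prop :=
  ∃ p q r s, p < q ∧ q < r ∧ r < s ∧ s < u.length ∧
    u.getD p 0 = u.getD s 0 ∧ u.getD q 0 = y ∧ u.getD p 0 < y ∧ y < u.getD r 0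

lemma avoids12312_concat_iff {u : List ℕ} {x : ℕ} :
    Avoids12312 (u ++ [x]) ↔ Avoids12312 u ∧ ¬ Completes12312 u x := by
  constructor
  · intro h
    constructor
    · rintro ⟨i1, i2, i3, i4, i5, h12, h23, h34, h45, h5, hv⟩
      refine h ⟨i1, i2, i3, i4, i5, h12, h23, h34, h45, by simp; omega, ?_⟩
      simpa (disch := omega) only [getD_concat_of_lt] using hv
    · rintro ⟨p, q, r, s, hpq, hqr, hrs, hs, hps, hq, hpy, hyr⟩
      refine h ⟨p, q, r, s, u.length, hpq, hqr, hrs, hs, by simp, ?_⟩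
      simp (disch := omega) only [getD_concat_of_lt, getD_concat_length]
      omega
  · rintro ⟨hu, hx⟩ ⟨i1, i2, i3, i4, i5, h12, h23, h34, h45, h5, hv⟩
    rw [List.length_append, List.length_singleton] at h5
    simp (disch := omega) only [getD_concat_of_lt] at hv
    rcases Nat.lt_or_ge i5 u.length with h5 | h5
    · rw [getD_concat_of_lt h5] at hv
      exact hu ⟨i1, i2, i3, i4, i5, h12, h23, h34, h45, h5, hv⟩
    · obtain rfl : i5 = u.length := by omega
      rw [getD_concat_length] at hv
      exact hx ⟨i1, i2, i3, i4, h12, h23, h34, h45, hv.1, by omega, by omega, by omega⟩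

lemma completes12312_concat_iff {u : List ℕ} {v y : ℕ} :
    Completes12312 (u ++ [v]) y ↔ Completes12312 u y ∨ (v < y ∧ ∃ p q r, p < q ∧ q < r ∧
      r < u.length ∧ u.getD p 0 = v ∧ u.getD q 0 = y ∧ y < u.getD r 0) := by
  constructor
  · rintro ⟨p, q, r, s, hpq, hqr, hrs, hs, hv⟩
    rw [List.length_append, List.length_singleton] at hs
    simp (disch := omega) only [getD_concat_of_lt] at hv
    rcases Nat.lt_or_ge s u.length with hs | hs
    · rw [getD_concat_of_lt hs] at hv
      exact Or.inl ⟨p, q, r, s, hpq, hqr, hrs, hs, hv⟩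
    · obtain rfl : s = u.length := by omega
      rw [getD_concat_length] at hv
      exact Or.inr ⟨by omega, p, q, r, hpq, hqr, hrs, hv.1, hv.2.1, hv.2.2.2⟩
  · rintro (⟨p, q, r, s, hpq, hqr, hrs, hs, hv⟩ |
      ⟨hvy, p, q, r, hpq, hqr, hr, hp, hq, hyr⟩)
    · refine ⟨p, q, r, s, hpq, hqr, hrs, by simp; omega, ?_⟩
      simpa (disch := omega) only [getD_concat_of_lt] using hv
    · refine ⟨p, q, r, u.length, hpq, hqr, hr, by simp, ?_⟩
      simp (disch := omega) only [getD_concat_of_lt, getD_concat_length]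
      omega

lemma not_completes12312_of_numBlocks_le {u : List ℕ} {y : ℕ} (hy : numBlocks u ≤ y) :
    ¬ Completes12312 u y := by
  rintro ⟨p, q, r, s, -, -, hrs, hs, -, -, -, hyr⟩
  have := getD_le_numBlocks (show r < u.length by omega)
  omega

open Classical in
noncomputable def allowedLetters (u : List ℕ) : Finset ℕ :=
  (Finset.Icc 1 (numBlocks u + 1)).filter fun y => ¬ Completes12312 u y

lemma mem_allowedLetters {u : List ℕ} {y : ℕ} :
    y ∈ allowedLetters u ↔ (1 ≤ y ∧ y ≤ numBlocks u + 1) ∧ ¬ Completes12312 u y := by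
  simp [allowedLetters]

lemma isCanonicalWord_and_avoids12312_concat_iff {u : List ℕ} {x : ℕ} :
    IsCanonicalWord (u ++ [x]) ∧ Avoids12312 (u ++ [x]) ↔
      (IsCanonicalWord u ∧ Avoids12312 u) ∧ x ∈ allowedLetters u := by
  rw [isCanonicalWord_concat_iff, avoids12312_concat_iff, mem_allowedLetters]
  tauto

lemma numBlocks_mem_allowedLetters {u : List ℕ} (hu : IsCanonicalWord u) (hne : u ≠ []) :
    numBlocks u ∈ allowedLetters u :=
  mem_allowedLetters.2
    ⟨⟨hu.one_le_numBlocks hne, by omega⟩, not_completes12312_of_numBlocks_le le_rfl⟩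

lemma numBlocks_succ_mem_allowedLetters (u : List ℕ) : numBlocks u + 1 ∈ allowedLetters u :=
  mem_allowedLetters.2 ⟨⟨by omega, le_rfl⟩, not_completes12312_of_numBlocks_le (by omega)⟩

lemma allowedLetters_concat_numBlocks_succ (u : List ℕ) :
    allowedLetters (u ++ [numBlocks u + 1]) = insert (numBlocks u + 2) (allowedLetters u) := by
  ext y
  have hp : ∀ p < u.length, u.getD p 0 ≠ numBlocks u + 1 := fun p hp => by
    have := getD_le_numBlocks hp; omega
  simp only [Finset.mem_insert, mem_allowedLetters, numBlocks_concat,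
    completes12312_concat_iff]
  constructor
  · rintro ⟨hy, hc⟩
    rcases Nat.lt_or_ge y (numBlocks u + 2) with h | h
    · exact Or.inr ⟨by omega, fun h' => hc (Or.inl h')⟩
    · exact Or.inl (by omega)
  · rintro (rfl | ⟨hy, hc⟩)
    · refine ⟨by omega, ?_⟩
      rintro (h | ⟨-, p, q, r, hpq, hqr, hr, hp', -, -⟩)
      · exact not_completes12312_of_numBlocks_le (by omega) h
      · exact hp p (by omega) hp'
    · refine ⟨by omega, ?_⟩
      rintro (h | ⟨-, p, q, r, hpq, hqr, hr, hp', -, -⟩)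
      · exact hc h
      · exact hp p (by omega) hp'

/-- A letter `y` with `v < y < numBlocks u` becomes forbidden: in a canonical word `v`, `y` and
`numBlocks u` occur in this order, so `v y (numBlocks u) v y` would be a `12312`. -/
lemma allowedLetters_concat_of_le {u : List ℕ} (hu : IsCanonicalWord u) {v : ℕ}
    (hv : v ∈ allowedLetters u) (hvm : v ≤ numBlocks u) :
    allowedLetters (u ++ [v]) =
      (allowedLetters u).filter (· ≤ v) ∪ {numBlocks u, numBlocks u + 1} := by
  have hv1 := (mem_allowedLetters.1 hv).1.1
  ext y
  simp only [Finset.mem_union, Finset.mem_filter, Finset.mem_insert, Finset.mem_singleton,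
    mem_allowedLetters, numBlocks_concat, max_eq_left hvm, completes12312_concat_iff]
  constructor
  · rintro ⟨hy, hc⟩
    by_cases hyv : y ≤ v
    · exact Or.inl ⟨⟨hy, fun h => hc (Or.inl h)⟩, hyv⟩
    by_cases hym : numBlocks u ≤ y
    · exact Or.inr (by omega)
    exfalso
    obtain ⟨r, hr, hrm⟩ := hu.exists_getD_eq_of_le_numBlocks (hv1.trans hvm) le_rfl
    obtain ⟨q, hqr, hq⟩ := hu.exists_getD_eq_of_lt (t := y) hr (by omega) (by omega)
    obtain ⟨p, hpq, hp⟩ := hu.exists_getD_eq_of_lt (t := v) (hqr.trans hr) hv1 (by omega)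
    exact hc (Or.inr ⟨by omega, p, q, r, hpq, hqr, hr, hp, hq, by omega⟩)
  · rintro (⟨⟨hy, hc⟩, hyv⟩ | hy)
    · refine ⟨hy, ?_⟩
      rintro (h | ⟨hvy, -⟩)
      · exact hc h
      · omega
    · refine ⟨by omega, ?_⟩
      rintro (h | ⟨-, -, -, r, -, -, hr, -, -, hyr⟩)
      · exact not_completes12312_of_numBlocks_le (by omega) h
      · have := getD_le_numBlocks hr; omega

/-- Appending `numBlocks u` is the child `none` of `u` in `wordTree`, so it is not a slot. -/
noncomputable def wordSlots (u : List ℕ) : Finset ℕ := (allowedLetters u).erase (numBlocks u)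

lemma wordSlots_concat_of_le {u : List ℕ} (hu : IsCanonicalWord u) {v : ℕ}
    (hv : v ∈ allowedLetters u) (hvm : v ≤ numBlocks u) :
    wordSlots (u ++ [v]) = insert (numBlocks u + 1) ((wordSlots u).filter (· ≤ v)) := by
  ext y
  simp only [wordSlots, numBlocks_concat, max_eq_left hvm,
    allowedLetters_concat_of_le hu hv hvm, Finset.mem_erase, Finset.mem_union, Finset.mem_filter,
    Finset.mem_insert, Finset.mem_singleton]
  constructor
  · rintro ⟨hym, (⟨hy, hyv⟩ | rfl | rfl)⟩
    · exact Or.inr ⟨⟨hym, hy⟩, hyv⟩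
    · exact absurd rfl hym
    · exact Or.inl rfl
  · rintro (rfl | ⟨⟨hym, hy⟩, hyv⟩)
    · exact ⟨by omega, Or.inr (Or.inr rfl)⟩
    · exact ⟨hym, Or.inl ⟨hy, hyv⟩⟩

lemma wordSlots_concat_numBlocks {u : List ℕ} (hu : IsCanonicalWord u) (hne : u ≠ []) :
    wordSlots (u ++ [numBlocks u]) = wordSlots u := by
  rw [wordSlots_concat_of_le hu (numBlocks_mem_allowedLetters hu hne) le_rfl]
  ext y
  have hy : y ∈ wordSlots u → y ≤ numBlocks u + 1 := fun hy =>
    (mem_allowedLetters.1 (Finset.mem_of_mem_erase hy)).1.2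
  have hsucc : numBlocks u + 1 ∈ wordSlots u :=
    Finset.mem_erase.2 ⟨by omega, numBlocks_succ_mem_allowedLetters u⟩
  simp only [Finset.mem_insert, Finset.mem_filter]
  constructor
  · rintro (rfl | ⟨hy, -⟩)
    exacts [hsucc, hy]
  · intro hy'
    have := hy hy'
    by_cases h : y = numBlocks u + 1
    exacts [Or.inl h, Or.inr ⟨hy', by omega⟩]

lemma card_wordSlots_concat {u : List ℕ} (hu : IsCanonicalWord u) (hne : u ≠ []) {x : ℕ}
    (hx : x ∈ wordSlots u) :
    (wordSlots (u ++ [x])).card = ((wordSlots u).filter (· ≤ x)).card + 1 := by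
  obtain ⟨hxm, hx⟩ := Finset.mem_erase.1 hx
  have hx1 := (mem_allowedLetters.1 hx).1.2
  rcases Nat.lt_or_ge x (numBlocks u) with hlt | hge
  · rw [wordSlots_concat_of_le hu hx hlt.le, Finset.card_insert_of_notMem]
    simp only [Finset.mem_filter, not_and]
    omega
  · obtain rfl : x = numBlocks u + 1 := by omega
    have hall : (wordSlots u).filter (· ≤ numBlocks u + 1) = wordSlots u :=
      Finset.filter_true_of_mem fun y hy =>
        (mem_allowedLetters.1 (Finset.mem_of_mem_erase hy)).1.2
    rw [hall, wordSlots, wordSlots, numBlocks_concat, max_eq_right (by omega),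
      allowedLetters_concat_numBlocks_succ, Finset.card_erase_of_mem (Finset.mem_insert_of_mem hx),
      Finset.card_insert_of_notMem, Finset.card_erase_of_mem (numBlocks_mem_allowedLetters hu hne)]
    · have := Finset.card_pos.2 ⟨_, hx⟩
      omega
    · intro h
      have := (mem_allowedLetters.1 h).1.2
      omega

abbrev AvoidingWord (n : ℕ) : Type :=
  {w : List ℕ // w.length = n ∧ IsCanonicalWord w ∧ Avoids12312 w}

noncomputable def slotLetter (u : List ℕ) : Option (wordSlots u) → ℕ
  | none => numBlocks u
  | some x => x

lemma slotLetter_mem_allowedLetters {u : List ℕ} (hu : IsCanonicalWord u) (hne : u ≠ [])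
    (c : Option (wordSlots u)) : slotLetter u c ∈ allowedLetters u := by
  cases c with
  | none => exact numBlocks_mem_allowedLetters hu hne
  | some x => exact Finset.mem_of_mem_erase x.2

lemma slotLetter_injective (u : List ℕ) : Function.Injective (slotLetter u) := by
  rintro (_ | ⟨x, hx⟩) (_ | ⟨y, hy⟩) h <;> simp only [slotLetter] at h
  · rfl
  · exact absurd h.symm (Finset.mem_erase.1 hy).1
  · exact absurd h (Finset.mem_erase.1 hx).1
  · simp [h]

noncomputable def wordStep (n : ℕ) (x : Σ u : AvoidingWord (n + 2), Option (wordSlots u.1)) :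
    AvoidingWord (n + 3) :=
  ⟨x.1.1 ++ [slotLetter x.1.1 x.2], by simp [x.1.2.1],
    isCanonicalWord_and_avoids12312_concat_iff.2
      ⟨x.1.2.2, slotLetter_mem_allowedLetters x.1.2.2.1
        (List.ne_nil_of_length_eq_add_one x.1.2.1) _⟩⟩

lemma wordStep_bijective (n : ℕ) : Function.Bijective (wordStep n) := by
  constructor
  · rintro ⟨⟨u, _⟩, c⟩ ⟨⟨u', _⟩, c'⟩ h
    obtain ⟨rfl, h⟩ := List.append_inj' (congrArg Subtype.val h) rfl
    obtain rfl := slotLetter_injective u (List.singleton_inj.1 h)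
    rfl
  · rintro ⟨w, hlen, hw⟩
    have hne := List.ne_nil_of_length_eq_add_one hlen
    obtain ⟨u, x, rfl⟩ : ∃ u x, w = u ++ [x] :=
      ⟨_, _, (List.dropLast_append_getLast hne).symm⟩
    obtain ⟨hu, hx⟩ := isCanonicalWord_and_avoids12312_concat_iff.1 hw
    have hulen : u.length = n + 2 := by simpa using hlen
    by_cases hxm : x = numBlocks u
    · exact ⟨⟨⟨u, hulen, hu⟩, none⟩, by subst hxm; rfl⟩
    · exact ⟨⟨⟨u, hulen, hu⟩, some ⟨x, Finset.mem_erase.2 ⟨hxm, hx⟩⟩⟩, rfl⟩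

noncomputable def wordTree : SlotTree where
  Obj n := AvoidingWord (n + 2)
  slots u := wordSlots u.1
  step n := Equiv.ofBijective (wordStep n) (wordStep_bijective n)
  card_slots_step_none _ u := congrArg Finset.card
    (wordSlots_concat_numBlocks u.2.2.1 (List.ne_nil_of_length_eq_add_one u.2.1))
  card_slots_step_some _ u x :=
    card_wordSlots_concat u.2.2.1 (List.ne_nil_of_length_eq_add_one u.2.1) x.2

/-! ### UH-free Schröder paths -/

lemma sHeight_append (A B : List SStep) (i : ℕ) :
    sHeight (A ++ B) i = sHeight A i + sHeight B (i - A.length) := by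
  simp [sHeight, List.take_append]

lemma sHeight_of_length_le {L : List SStep} {i : ℕ} (h : L.length ≤ i) :
    sHeight L i = sHeight L L.length := by
  simp [sHeight, List.take_of_length_le h]

lemma sHeight_length (L : List SStep) : sHeight L L.length = (L.map SStep.eff).sum := by
  simp [sHeight]

lemma sHeight_succ {L : List SStep} {i : ℕ} {s : SStep} (h : L[i]? = some s) :
    sHeight L (i + 1) = sHeight L i + s.eff := by
  simp [sHeight, List.take_add_one, h]

lemma sHeight_singleton (s : SStep) (i : ℕ) : sHeight [s] i = if i = 0 then 0 else s.eff := by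
  cases i <;> simp [sHeight]

lemma uHFree_iff_isChain {L : List SStep} :
    UHFree L ↔ L.IsChain fun a b => ¬ (a = SStep.U ∧ b = SStep.H) := by
  rw [List.isChain_iff_getElem, UHFree]
  constructor
  · intro h i hi
    simpa [List.getElem?_eq_getElem hi, List.getElem?_eq_getElem (Nat.lt_of_succ_lt hi)] using h i
  · rintro h i ⟨hU, hH⟩
    obtain ⟨hi, hH⟩ := List.getElem?_eq_some_iff.1 hH
    rw [List.getElem?_eq_getElem (Nat.lt_of_succ_lt hi), Option.some_inj] at hU
    exact h i hi ⟨hU, hH⟩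

namespace IsSchroder

variable {L : List SStep} {m : ℕ}

lemma sHeight_length_eq_zero (hS : IsSchroder L m) : sHeight L L.length = 0 := by
  rw [sHeight_length, hS.2.1]

lemma getLast?_ne_U (hS : IsSchroder L m) : L.getLast? ≠ some SStep.U := by
  intro h
  obtain ⟨A, rfl⟩ := List.getLast?_eq_some_iff.1 h
  have h0 := hS.sHeight_length_eq_zero
  have := hS.2.2 A.length
  simp [sHeight_append, sHeight_singleton, SStep.eff] at h0 this
  rw [sHeight_of_length_le (by omega)] at h0
  omega

end IsSchroder

lemma sHeight_take (L : List SStep) (g i : ℕ) : sHeight (L.take g) i = sHeight L (min i g) := by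
  simp [sHeight, List.take_take]

lemma sHeight_drop {L : List SStep} {g : ℕ} (hg : g ≤ L.length) (t : ℕ) :
    sHeight (L.drop g) t = sHeight L (g + t) - sHeight L g := by
  have h := sHeight_append (L.take g) (L.drop g) (g + t)
  rw [List.take_append_drop, sHeight_take, List.length_take, min_eq_left hg] at h
  simp only [min_eq_right (Nat.le_add_right g t), Nat.add_sub_cancel_left] at h
  omega

def liftFrom (L : List SStep) (g : ℕ) : List SStep :=
  L.take g ++ SStep.U :: (L.drop g ++ [SStep.D])

lemma uHFree_append_U_append_D_iff {A B : List SStep} :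
    UHFree (A ++ SStep.U :: (B ++ [SStep.D])) ↔ UHFree (A ++ B) ∧ B.head? ≠ some SStep.H := by
  rw [uHFree_iff_isChain, uHFree_iff_isChain, List.isChain_append, List.isChain_cons,
    List.isChain_append (l₁ := B), List.isChain_append (l₁ := A) (l₂ := B)]
  rcases B with _ | ⟨b, B⟩ <;>
    simp only [List.head?_cons, List.nil_append, List.cons_append, List.head?_nil,
      List.isChain_singleton, List.isChain_nil, Option.mem_def, Option.some.injEq, forall_eq',
      reduceCtorEq, and_false, true_and, and_true, not_false_eq_true, implies_true, ne_eq,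
      IsEmpty.forall_iff]
  exact ⟨fun ⟨hA, hb, hB⟩ => ⟨⟨hA, hB, fun _ _ h => hb h.2⟩, hb⟩,
    fun ⟨⟨hA, hB, _⟩, hb⟩ => ⟨hA, hb, hB⟩⟩

section liftFrom

variable {L : List SStep} {g : ℕ}

lemma length_liftFrom (hg : g ≤ L.length) : (liftFrom L g).length = L.length + 2 := by
  simp [liftFrom]; omega

lemma sum_len_liftFrom : ((liftFrom L g).map SStep.len).sum = (L.map SStep.len).sum + 2 := by
  conv_rhs => rw [← List.take_append_drop g L, List.map_append, List.sum_append]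
  simp only [liftFrom, List.map_append, List.map_cons, List.sum_append, List.sum_cons,
    List.map_nil, List.sum_nil, SStep.len]
  omega

lemma sHeight_liftFrom (hg : g ≤ L.length) (i : ℕ) :
    sHeight (liftFrom L g) i =
      if i ≤ g then sHeight L i
      else if i ≤ L.length + 1 then sHeight L (i - 1) + 1
      else sHeight L L.length := by
  have h := sHeight_drop hg (i - g - 1)
  rw [liftFrom, ← List.singleton_append, sHeight_append, sHeight_append, sHeight_append,
    sHeight_take, sHeight_singleton, sHeight_singleton]
  simp only [List.length_take, List.length_singleton, List.length_drop, min_eq_left hg,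
    SStep.eff, h]
  rcases le_or_gt i g with h1 | h1
  · rw [if_pos (show i - g = 0 by omega), if_pos (show i - g - 1 - (L.length - g) = 0 by omega),
      if_pos h1, min_eq_left h1, show g + (i - g - 1) = g by omega]
    ring
  rw [if_neg (show i - g ≠ 0 by omega), if_neg (show ¬ i ≤ g by omega), min_eq_right h1.le,
    show g + (i - g - 1) = i - 1 by omega]
  rcases le_or_gt i (L.length + 1) with h2 | h2
  · rw [if_pos (show i - g - 1 - (L.length - g) = 0 by omega), if_pos h2]
    ring
  · rw [if_neg (show i - g - 1 - (L.length - g) ≠ 0 by omega),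
      if_neg (show ¬ i ≤ L.length + 1 by omega),
      sHeight_of_length_le (show L.length ≤ i - 1 by omega)]
    ring

lemma getElem?_liftFrom_of_lt (hg : g ≤ L.length) {i : ℕ} (hi : i < g) :
    (liftFrom L g)[i]? = L[i]? := by
  rw [liftFrom, List.getElem?_append_left (by simp; omega), List.getElem?_take_of_lt hi]

lemma getElem?_liftFrom_self (hg : g ≤ L.length) : (liftFrom L g)[g]? = some SStep.U := by
  rw [liftFrom, List.getElem?_append_right (by simp)]
  simp [hg]

lemma getLast?_liftFrom : (liftFrom L g).getLast? = some SStep.D :=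
  List.getLast?_eq_some_iff.2 ⟨L.take g ++ SStep.U :: L.drop g, by simp [liftFrom]⟩

lemma uHFree_liftFrom_iff : UHFree (liftFrom L g) ↔ UHFree L ∧ L[g]? ≠ some SStep.H := by
  rw [liftFrom, uHFree_append_U_append_D_iff, List.take_append_drop, List.head?_drop]

lemma take_liftFrom (hg : g ≤ L.length) : (liftFrom L g).take g = L.take g :=
  List.take_left' (by simp [hg])

lemma drop_liftFrom (hg : g ≤ L.length) :
    (liftFrom L g).drop (g + 1) = L.drop g ++ [SStep.D] := by
  rw [liftFrom, ← List.singleton_append, ← List.append_assoc,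
    List.drop_left' (by simp [hg])]

lemma isSchroder_liftFrom {m : ℕ} (hS : IsSchroder L m) (hg : g ≤ L.length) :
    IsSchroder (liftFrom L g) (m + 1) := by
  refine ⟨by rw [sum_len_liftFrom, hS.1]; ring, ?_, fun i => ?_⟩
  · rw [← sHeight_length, length_liftFrom hg, sHeight_liftFrom hg, if_neg (by omega),
      if_neg (by omega), hS.sHeight_length_eq_zero]
  · have := hS.2.2 i
    have := hS.2.2 (i - 1)
    have := hS.sHeight_length_eq_zero
    rw [sHeight_liftFrom hg]
    split_ifs <;> omega

lemma isSchroder_of_liftFrom {m : ℕ} (hS : IsSchroder (liftFrom L g) (m + 1))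
    (hg : g ≤ L.length)
    (hpos : ∀ i, g < i → i ≤ L.length + 1 → sHeight (liftFrom L g) i ≠ 0) :
    IsSchroder L m := by
  have hend : sHeight L L.length = 0 := by
    have := hS.sHeight_length_eq_zero
    rwa [length_liftFrom hg, sHeight_liftFrom hg, if_neg (by omega), if_neg (by omega)] at this
  refine ⟨by have := hS.1; rw [sum_len_liftFrom] at this; omega, by rwa [← sHeight_length],
    ?_⟩
  intro i
  rcases le_or_gt i g with h1 | h1
  · simpa [sHeight_liftFrom hg, h1] using hS.2.2 i
  rcases le_or_gt i L.length with h2 | h2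
  · have h := hS.2.2 (i + 1)
    have h' := hpos (i + 1) (by omega) (by omega)
    rw [sHeight_liftFrom hg, if_neg (by omega), if_pos (by omega)] at h h'
    simp only [Nat.add_sub_cancel] at h h'
    omega
  · rw [sHeight_of_length_le h2.le, hend]

end liftFrom

/-- The positions on the axis where `liftFrom` can insert a `U` without creating `UH`. -/
def grounds (L : List SStep) : Finset ℕ :=
  (Finset.range (L.length + 1)).filter fun j => sHeight L j = 0 ∧ L[j]? ≠ some SStep.H

lemma mem_grounds {L : List SStep} {j : ℕ} :
    j ∈ grounds L ↔ j ≤ L.length ∧ sHeight L j = 0 ∧ L[j]? ≠ some SStep.H := by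
  simp [grounds]

lemma IsSchroder.length_mem_grounds {L : List SStep} {m : ℕ} (hS : IsSchroder L m) :
    L.length ∈ grounds L :=
  mem_grounds.2 ⟨le_rfl, hS.sHeight_length_eq_zero, by simp⟩

lemma grounds_liftFrom {L : List SStep} {m g : ℕ} (hS : IsSchroder L m) (hg : g ∈ grounds L) :
    grounds (liftFrom L g) = insert (L.length + 2) ((grounds L).filter (· ≤ g)) := by
  obtain ⟨hgL, hg0, hgH⟩ := mem_grounds.1 hg
  ext j
  simp only [mem_grounds, Finset.mem_insert, Finset.mem_filter, length_liftFrom hgL,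
    sHeight_liftFrom hgL]
  rcases lt_trichotomy j g with h | rfl | h
  · rw [getElem?_liftFrom_of_lt hgL h, if_pos h.le]
    constructor
    · exact fun ⟨_, h0, hH⟩ => Or.inr ⟨⟨by omega, h0, hH⟩, h.le⟩
    · rintro (h' | ⟨⟨_, h0, hH⟩, _⟩)
      · omega
      · exact ⟨by omega, h0, hH⟩
  · rw [getElem?_liftFrom_self hgL, if_pos le_rfl]
    simp [hg0, hgH]
    omega
  rcases le_or_gt j (L.length + 1) with h' | h'
  · have := hS.2.2 (j - 1)
    rw [if_neg (by omega), if_pos h']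
    constructor
    · rintro ⟨-, h0, -⟩; omega
    · rintro (h'' | ⟨-, h''⟩) <;> omega
  · rw [if_neg (by omega), if_neg (by omega), hS.sHeight_length_eq_zero]
    constructor
    · rintro ⟨hj, -, -⟩; exact Or.inl (by omega)
    · intro
      refine ⟨by omega, rfl, ?_⟩
      rw [List.getElem?_eq_none (by rw [length_liftFrom hgL]; omega)]
      simp

lemma card_grounds_liftFrom {L : List SStep} {m g : ℕ} (hS : IsSchroder L m)
    (hg : g ∈ grounds L) :
    (grounds (liftFrom L g)).card = ((grounds L).filter (· ≤ g)).card + 1 := by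
  rw [grounds_liftFrom hS hg, Finset.card_insert_of_notMem]
  intro h
  have := (mem_grounds.1 (Finset.mem_filter.1 h).1).1
  omega

lemma grounds_append_H {L : List SStep} {m : ℕ} (hS : IsSchroder L m) :
    grounds (L ++ [SStep.H]) = insert (L.length + 1) ((grounds L).erase L.length) := by
  ext j
  simp only [mem_grounds, Finset.mem_insert, Finset.mem_erase, List.length_append,
    List.length_singleton, sHeight_append, sHeight_singleton, SStep.eff]
  rcases lt_trichotomy j L.length with h | rfl | h
  · rw [List.getElem?_append_left h, if_pos (by omega)]
    constructor
    · exact fun ⟨_, h0, hH⟩ => Or.inr ⟨by omega, by omega, by simpa using h0, hH⟩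
    · rintro (h' | ⟨-, _, h0, hH⟩)
      · omega
      · exact ⟨by omega, by simpa using h0, hH⟩
  · simp
  · rw [sHeight_of_length_le h.le, hS.sHeight_length_eq_zero,
      List.getElem?_eq_none (by simp; omega)]
    constructor
    · rintro ⟨hj, -, -⟩; exact Or.inl (by omega)
    · intro; exact ⟨by omega, by simp, by simp⟩

lemma card_grounds_append_H {L : List SStep} {m : ℕ} (hS : IsSchroder L m) :
    (grounds (L ++ [SStep.H])).card = (grounds L).card := by
  rw [grounds_append_H hS, Finset.card_insert_of_notMem,
    Finset.card_erase_of_mem hS.length_mem_grounds,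
    Nat.sub_add_cancel (Finset.card_pos.2 ⟨_, hS.length_mem_grounds⟩)]
  intro h
  have := (mem_grounds.1 (Finset.mem_of_mem_erase h)).1
  omega

section appendH

variable {L : List SStep} {m : ℕ}

lemma isSchroder_append_H_iff : IsSchroder (L ++ [SStep.H]) (m + 1) ↔ IsSchroder L m := by
  have hlen : ∀ i, sHeight (L ++ [SStep.H]) i = sHeight L i := fun i => by
    simp [sHeight_append, sHeight_singleton, SStep.eff]
  simp only [IsSchroder, hlen, List.map_append, List.sum_append, List.map_cons, List.map_nil,
    List.sum_cons, List.sum_nil, SStep.len, SStep.eff]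
  constructor <;> rintro ⟨h1, h2, h3⟩ <;> exact ⟨by omega, by omega, h3⟩

lemma uHFree_append_H_iff (hS : IsSchroder L m) : UHFree (L ++ [SStep.H]) ↔ UHFree L := by
  have := hS.getLast?_ne_U
  simp only [uHFree_iff_isChain, List.isChain_append, List.isChain_singleton, true_and,
    and_iff_left_iff_imp]
  intro _ x hx y _ h
  exact this (h.1 ▸ hx)

end appendH

def lastReturn (L : List SStep) : ℕ := Nat.findGreatest (fun j => sHeight L j = 0) (L.length - 1)

lemma lastReturn_liftFrom {L : List SStep} {m g : ℕ} (hS : IsSchroder L m)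
    (hg : g ∈ grounds L) :
    lastReturn (liftFrom L g) = g := by
  obtain ⟨hgL, hg0, -⟩ := mem_grounds.1 hg
  rw [lastReturn, Nat.findGreatest_eq_iff, length_liftFrom hgL]
  refine ⟨by omega, fun _ => by rwa [sHeight_liftFrom hgL, if_pos le_rfl], fun i hi hiL => ?_⟩
  have := hS.2.2 (i - 1)
  rw [sHeight_liftFrom hgL, if_neg (by omega), if_pos (by omega)]
  omega

def lowerAt (L : List SStep) (g : ℕ) : List SStep := L.take g ++ (L.drop (g + 1)).dropLast

lemma lowerAt_liftFrom {L : List SStep} {g : ℕ} (hg : g ≤ L.length) :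
    lowerAt (liftFrom L g) g = L := by
  rw [lowerAt, take_liftFrom hg, drop_liftFrom hg, List.dropLast_concat, List.take_append_drop]

lemma liftFrom_lowerAt {L : List SStep} {g : ℕ} (hU : L[g]? = some SStep.U)
    (hD : L.getLast? = some SStep.D) (hlen : g + 1 < L.length) :
    liftFrom (lowerAt L g) g = L := by
  obtain ⟨B, hB⟩ : ∃ B, L.drop (g + 1) = B ++ [SStep.D] := by
    apply List.getLast?_eq_some_iff.1
    rwa [List.getLast?_drop, if_neg (by omega)]
  have hg : (L.take g).length = g := by simp; omega
  obtain ⟨_, hUg⟩ := List.getElem?_eq_some_iff.1 hU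
  rw [lowerAt, hB, List.dropLast_concat, liftFrom, List.take_left' hg, List.drop_left' hg, ← hB]
  conv_rhs => rw [← List.take_append_drop g L, List.drop_eq_getElem_cons (by omega), hUg]

/-- The last-return decomposition of a path ending with `D`. -/
lemma exists_liftFrom_eq {L' : List SStep} {m : ℕ} (hS : IsSchroder L' (m + 1)) (hU : UHFree L')
    (hD : L'.getLast? = some SStep.D) :
    ∃ L, IsSchroder L m ∧ UHFree L ∧ ∃ g ∈ grounds L, liftFrom L g = L' := by
  set g := lastReturn L'
  have hlen : 0 < L'.length := List.length_pos_iff.2 fun h => by simp [h] at hD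
  have hgL : g ≤ L'.length - 1 := Nat.findGreatest_le _
  have hg0 : sHeight L' g = 0 := Nat.findGreatest_spec (P := fun j => sHeight L' j = 0) (m := 0)
    (Nat.zero_le _) (by simp [sHeight])
  have hpos : ∀ i, g < i → i ≤ L'.length - 1 → sHeight L' i ≠ 0 :=
    fun i => Nat.findGreatest_is_greatest
  obtain ⟨s, hs⟩ : ∃ s, L'[g]? = some s := ⟨_, List.getElem?_eq_getElem (by omega)⟩
  have hstep := sHeight_succ hs
  have hnext := hS.2.2 (g + 1)
  have hgU : g + 1 < L'.length ∧ s = SStep.U := by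
    rcases Nat.lt_or_ge (g + 1) L'.length with h | h
    · have := hpos (g + 1) (by omega) (by omega)
      refine ⟨h, ?_⟩
      cases s <;> simp_all [SStep.eff]
    · obtain rfl : s = SStep.D := by
        rw [List.getLast?_eq_getElem?, show L'.length - 1 = g by omega, hs] at hD
        exact Option.some_inj.1 hD
      have := hS.sHeight_length_eq_zero
      rw [show L'.length = g + 1 by omega] at this
      simp [SStep.eff] at hstep; omega
  obtain ⟨hglen, rfl⟩ := hgU
  have hlift := liftFrom_lowerAt hs hD hglen
  set L := lowerAt L' g
  have hgL' : g ≤ L.length := by simp [L, lowerAt]; omega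
  rw [← hlift] at hS hU hg0 hpos
  rw [length_liftFrom hgL'] at hpos
  obtain ⟨hUL, hLH⟩ := uHFree_liftFrom_iff.1 hU
  refine ⟨L, isSchroder_of_liftFrom hS hgL' fun i h1 h2 => hpos i h1 (by omega), hUL, g,
    mem_grounds.2 ⟨hgL', ?_, hLH⟩, hlift⟩
  rwa [sHeight_liftFrom hgL', if_pos le_rfl] at hg0

abbrev UHFreeSchroder (m : ℕ) : Type := {L : List SStep // IsSchroder L m ∧ UHFree L}

def pathChild (L : List SStep) : Option (grounds L) → List SStep
  | none => L ++ [SStep.H]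
  | some g => liftFrom L g

lemma pathChild_spec {L : List SStep} {m : ℕ} (hL : IsSchroder L m ∧ UHFree L)
    (c : Option (grounds L)) : IsSchroder (pathChild L c) (m + 1) ∧ UHFree (pathChild L c) := by
  cases c with
  | none => exact ⟨isSchroder_append_H_iff.2 hL.1, (uHFree_append_H_iff hL.1).2 hL.2⟩
  | some g =>
    obtain ⟨hgL, -, hgH⟩ := mem_grounds.1 g.2
    exact ⟨isSchroder_liftFrom hL.1 hgL, uHFree_liftFrom_iff.2 ⟨hL.2, hgH⟩⟩

def pathStep (m : ℕ) (x : Σ L : UHFreeSchroder m, Option (grounds L.1)) :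
    UHFreeSchroder (m + 1) :=
  ⟨pathChild x.1.1 x.2, pathChild_spec x.1.2 x.2⟩

lemma pathStep_bijective (m : ℕ) : Function.Bijective (pathStep m) := by
  constructor
  · rintro ⟨⟨L, hL⟩, c⟩ ⟨⟨L', hL'⟩, c'⟩ h
    have h : pathChild L c = pathChild L' c' := congrArg Subtype.val h
    rcases c with _ | ⟨g, hg⟩ <;> rcases c' with _ | ⟨g', hg'⟩
    · obtain rfl := List.append_cancel_right h
      rfl
    · have := congrArg List.getLast? h
      simp [pathChild, getLast?_liftFrom] at this
    · have := congrArg List.getLast? h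
      simp [pathChild, getLast?_liftFrom] at this
    · simp only [pathChild] at h
      have hgL : g ≤ L.length := (mem_grounds.1 hg).1
      have hgL' : g' ≤ L'.length := (mem_grounds.1 hg').1
      obtain rfl : g = g' := by
        rw [← lastReturn_liftFrom hL.1 hg, h, lastReturn_liftFrom hL'.1 hg']
      obtain rfl : L = L' := by
        rw [← lowerAt_liftFrom hgL, h, lowerAt_liftFrom hgL']
      rfl
  · rintro ⟨L', hS, hU⟩
    rcases hlast : L'.getLast? with _ | s
    · have := hS.1
      simp_all
    cases s
    · exact absurd hlast hS.getLast?_ne_U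
    · obtain ⟨L, hSL, hUL, g, hg, rfl⟩ := exists_liftFrom_eq hS hU hlast
      exact ⟨⟨⟨L, hSL, hUL⟩, some ⟨g, hg⟩⟩, rfl⟩
    · obtain ⟨L, rfl⟩ := List.getLast?_eq_some_iff.1 hlast
      have hSL := isSchroder_append_H_iff.1 hS
      exact ⟨⟨⟨L, hSL, (uHFree_append_H_iff hSL).1 hU⟩, none⟩, rfl⟩

noncomputable def pathTree : SlotTree where
  Obj n := UHFreeSchroder (n + 1)
  slots L := grounds L.1
  step n := Equiv.ofBijective (pathStep (n + 1)) (pathStep_bijective (n + 1))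
  card_slots_step_none _ L := card_grounds_append_H L.2.1
  card_slots_step_some _ L g := card_grounds_liftFrom L.2.1 g.2

lemma IsSchroder.getElem?_zero_ne_D {L : List SStep} {m : ℕ} (hS : IsSchroder L m) :
    L[0]? ≠ some SStep.D := by
  intro h
  have := hS.2.2 1
  rw [sHeight_succ h] at this
  simp [sHeight, SStep.eff] at this

lemma getElem?_zero_pathChild {L : List SStep} {m : ℕ} (hS : IsSchroder L (m + 1))
    (c : Option (grounds L)) : (pathChild L c)[0]? = L[0]? := by
  have hne : L ≠ [] := by rintro rfl; simpa using hS.1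
  have hlen := List.length_pos_iff.2 hne
  rcases c with _ | ⟨g, hg⟩
  · exact List.getElem?_append_left hlen
  obtain ⟨hgL, -, hgH⟩ := mem_grounds.1 hg
  rcases Nat.eq_zero_or_pos g with rfl | hg0
  · rw [pathChild, getElem?_liftFrom_self hgL, List.getElem?_eq_getElem hlen]
    have hD := hS.getElem?_zero_ne_D
    rw [List.getElem?_eq_getElem hlen] at hD hgH
    cases h : L[0] <;> simp_all
  · exact getElem?_liftFrom_of_lt hgL hg0

/-! ### The subtrees below `[1, 2]` and `[U, D]` -/

noncomputable def separatedWordTree : SlotTree :=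
  wordTree.restrict (fun _ u => u.1.getD 0 0 ≠ u.1.getD 1 0) fun _ u _ => by
    have := u.2.1
    change (u.1 ++ [_]).getD 0 0 ≠ (u.1 ++ [_]).getD 1 0 ↔ _
    rw [getD_concat_of_lt (by omega), getD_concat_of_lt (by omega)]

noncomputable def upPathTree : SlotTree :=
  pathTree.restrict (fun _ L => L.1[0]? = some SStep.U) fun _ (L : UHFreeSchroder (_ + 1)) c =>
    Iff.of_eq (congrArg (· = some SStep.U) (getElem?_zero_pathChild L.2.1 c))

lemma IsCanonicalWord.eq_one_two {w : List ℕ} (hw : IsCanonicalWord w) (hlen : w.length = 2)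
    (h : w.getD 0 0 ≠ w.getD 1 0) : w = [1, 2] := by
  obtain ⟨a, b, rfl⟩ : ∃ a b, w = [a, b] := List.length_eq_two.1 hlen
  have h0 := hw 0 (by simp)
  have h1 := hw 1 (by simp)
  simp [prefMax] at h0 h1 h
  simp only [List.cons.injEq, and_true]
  omega

lemma length_le_sum_len (L : List SStep) : L.length ≤ (L.map SStep.len).sum := by
  induction L with
  | nil => simp
  | cons s L ih => cases s <;> simp [SStep.len] <;> omega

lemma IsSchroder.eq_U_D {L : List SStep} (hS : IsSchroder L 1) (h : L[0]? = some SStep.U) :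
    L = [SStep.U, SStep.D] := by
  have hlen := (length_le_sum_len L).trans hS.1.le
  have h2 := hS.2.1
  rcases L with _ | ⟨s, _ | ⟨t, _ | ⟨r, L⟩⟩⟩
  · simp at h
  · simp_all [SStep.eff]
  · obtain rfl : s = SStep.U := by simpa using h
    cases t <;> simp_all [SStep.eff]
  · simp at hlen

lemma card_wordSlots_one_two : (wordSlots [1, 2]).card = 2 := by
  have h : allowedLetters [1, 2] = Finset.Icc 1 3 := by
    ext y
    have : ¬ Completes12312 [1, 2] y := fun ⟨_, _, _, _, _, _, _, hs, _⟩ => by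
      simp at hs; omega
    simp [mem_allowedLetters, numBlocks, this]
  simp [wordSlots, h, numBlocks]

lemma card_grounds_U_D : (grounds [SStep.U, SStep.D]).card = 2 := by
  decide

noncomputable def rootEquiv : separatedWordTree.Obj 0 ≃ upPathTree.Obj 0 where
  toFun _ := ⟨⟨[SStep.U, SStep.D], ⟨rfl, rfl, fun i => by
      rcases i with _ | _ | _ | i <;> simp [sHeight, SStep.eff]⟩, by
      rintro (_ | _ | i) <;> simp⟩, rfl⟩
  invFun _ := ⟨⟨[1, 2], rfl, fun i hi => by
      simp only [List.length_cons, List.length_nil] at hi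
      interval_cases i <;> simp [prefMax], fun ⟨_, _, _, _, _, _, _, _, _, h5, _⟩ => by
      simp at h5; omega⟩, by simp⟩
  left_inv w := Subtype.ext <| Subtype.ext (w.1.2.2.1.eq_one_two w.1.2.1 w.2).symm
  right_inv L := Subtype.ext <| Subtype.ext (L.1.2.1.eq_U_D L.2).symm

lemma card_slots_rootEquiv (w : separatedWordTree.Obj 0) :
    (upPathTree.slots (rootEquiv w)).card = (separatedWordTree.slots w).card := by
  change (grounds [SStep.U, SStep.D]).card = (wordSlots w.1.1).card
  rw [w.1.2.2.1.eq_one_two w.1.2.1 w.2, card_grounds_U_D, card_wordSlots_one_two]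

def separatedWordTree.objEquiv (n : ℕ) : separatedWordTree.Obj n ≃ {w : List ℕ //
    w.length = n + 2 ∧ IsCanonicalWord w ∧ Avoids12312 w ∧ w.getD 0 0 ≠ w.getD 1 0} :=
  (Equiv.subtypeSubtypeEquivSubtypeInter
    (fun w => w.length = n + 2 ∧ IsCanonicalWord w ∧ Avoids12312 w)
    (fun w => w.getD 0 0 ≠ w.getD 1 0)).trans (Equiv.subtypeEquivRight fun _ => by
      simp only [and_assoc])

def upPathTree.objEquiv (n : ℕ) : upPathTree.Obj n ≃ {L : List SStep //
    IsSchroder L (n + 1) ∧ UHFree L ∧ L[0]? = some SStep.U} :=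
  (Equiv.subtypeSubtypeEquivSubtypeInter (fun L => IsSchroder L (n + 1) ∧ UHFree L)
    (fun L => L[0]? = some SStep.U)).trans (Equiv.subtypeEquivRight fun _ => and_assoc)

/-- For every integer `n ≥ 2`, the number of UH-free Schröder paths of length `2 * (n - 1)`
whose first step is `U` equals the number of 12312-avoiding partitions of `[n]` in which
`1` and `2` lie in different blocks. -/
theorem stmt19 (n : ℕ) (hn : 2 ≤ n) :
    Nat.card {L : List SStep // IsSchroder L (n - 1) ∧ UHFree L ∧
        L[0]? = some SStep.U} =
    Nat.card {w : List ℕ // w.length = n ∧ IsCanonicalWord w ∧ Avoids12312 w ∧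
        w.getD 0 0 ≠ w.getD 1 0} := by
  obtain ⟨k, rfl⟩ : ∃ k, n = k + 2 := ⟨n - 2, by omega⟩
  obtain ⟨e, -⟩ := SlotTree.exists_equiv separatedWordTree upPathTree rootEquiv
    card_slots_rootEquiv k
  exact Nat.card_congr
    ((upPathTree.objEquiv k).symm.trans (e.symm.trans (separatedWordTree.objEquiv k)))
end
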